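/- There is no DAG D' on vertex set V = {1,2,3,4} whose d-separation relation agrees with the following independency model on V: pairs (1,2), (2,3), (3,4) are dependent given every subset of V (no conditioning set d-separates them), while {1} ⟂ {3} given ∅, {1} ⟂ {3} given {4}, {2} ⟂ {4} given ∅, and {2} ⟂ {4} given {1} all hold. -/

import Mathlib

/-- A directed graph. -/
structure DiGr (U : Type) where
  Adj : U → U → Prop

/-- Undirected adjacency induced by a directed graph. -/
def DiGr.UAdj {U : Type} (D : DiGr U) (a b : U) : Prop := D.Adj a b ∨ D.Adj b a

/-- `b` is `a` itself or a descendant of `a`. -/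
def DiGr.Reaches {U : Type} (D : DiGr U) : U → U → Prop := Relation.ReflTransGen D.Adj

/-- Acyclicity of a directed graph. -/
def DiGr.Acyclic {U : Type} (D : DiGr U) : Prop := ∀ a, ¬ Relation.TransGen D.Adj a a

/-- A path in the underlying undirected graph of `D`, given as its list of
(distinct) vertices, consecutive ones being adjacent. -/
def IsUPath {U : Type} (D : DiGr U) (p : List U) : Prop :=
  p.Chain' D.UAdj ∧ p.Nodup

/-- The internal node at position `i+1` of the path `p` has converging arrows. -/
def ColliderAt {U : Type} (D : DiGr U) (p : List U) (i : ℕ) : Prop :=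
  ∃ a w b, p[i]? = some a ∧ p[i + 1]? = some w ∧ p[i + 2]? = some b ∧
    D.Adj a w ∧ D.Adj b w

/-- The path `p` is blocked by `C` at the internal node in position `i+1`:
either that node is a collider and neither it nor any of its descendants is in
`C`, or it is a non-collider belonging to `C`. -/
def BlockedAt {U : Type} (D : DiGr U) (C : Set U) (p : List U) (i : ℕ) : Prop :=
  ∃ w, p[i + 1]? = some w ∧ i + 2 < p.length ∧
    ((ColliderAt D p i ∧ ∀ d, D.Reaches w d → d ∉ C) ∨ (¬ ColliderAt D p i ∧ w ∈ C))

/-- `C` d-separates `A` from `B` in `D`: every path between a node of `A` and a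
node of `B` is blocked by `C`. -/
def DSep {U : Type} (D : DiGr U) (A C B : Set U) : Prop :=
  ∀ p : List U, IsUPath D p → (∃ a ∈ A, p.head? = some a) →
    (∃ b ∈ B, p.getLast? = some b) → ∃ i, BlockedAt D C p i

/-- `(A,C,B)` belongs to the causal model of `D`: the three sets are pairwise
disjoint and `C` d-separates `A` from `B`. -/
def InCausal {U : Type} (D : DiGr U) (A C B : Set U) : Prop :=
  Disjoint A B ∧ Disjoint A C ∧ Disjoint B C ∧ DSep D A C B

/-! In a DAG, two vertices that no conditioning set d-separates are adjacent: otherwise the parents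
of whichever one is not a descendant of the other separate them (local Markov property). Hence
0 - 1 - 2 - 3 is a path of the skeleton, and the marginal independencies of 0, 2 and of 1, 3 force
1 and 2 to be colliders on 0 - 1 - 2 and 1 - 2 - 3, i.e. 2 → 1 and 1 → 2: a cycle. -/

variable {U : Type} {D : DiGr U}

theorem DiGr.UAdj.symm {a b : U} (h : D.UAdj a b) : D.UAdj b a := Or.symm h

theorem DiGr.Acyclic.not_adj_of_reaches (hac : D.Acyclic) {x y : U} (h : D.Reaches x y) :
    ¬ D.Adj y x :=
  fun hyx => hac x (Relation.TransGen.tail' h hyx)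

theorem DiGr.Acyclic.reaches_antisymm (hac : D.Acyclic) {x y : U} (hxy : D.Reaches x y)
    (hyx : D.Reaches y x) : x = y := by
  rcases Relation.reflTransGen_iff_eq_or_transGen.mp hxy with h | h
  · exact h.symm
  · exact absurd (h.trans_left hyx) (hac x)

theorem DiGr.Acyclic.parents_subset_compl_pair (hac : D.Acyclic) {a b : U} (hn : ¬ D.UAdj a b) :
    {v | D.Adj v a} ⊆ Set.univ \ {a, b} := by
  intro v hv
  simp only [Set.mem_sdiff, Set.mem_univ, true_and, Set.mem_insert_iff, Set.mem_singleton_iff]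
  rintro (rfl | rfl)
  · exact hac v (.single hv)
  · exact hn (Or.inr hv)

theorem IsUPath.reverse {p : List U} (hp : IsUPath D p) : IsUPath D p.reverse :=
  ⟨List.isChain_reverse.mpr (hp.1.imp fun _ _ h => h.symm), List.nodup_reverse.mpr hp.2⟩

theorem colliderAt_reverse {p : List U} {i : ℕ} (hi : i + 2 < p.length)
    (h : ColliderAt D p.reverse i) : ColliderAt D p (p.length - 3 - i) := by
  obtain ⟨x, w, y, hx, hw, hy, hxw, hyw⟩ := h
  rw [List.getElem?_reverse (by omega)] at hx hw hy
  refine ⟨y, w, x, ?_, ?_, ?_, hyw, hxw⟩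
  · rwa [show p.length - 3 - i = p.length - 1 - (i + 2) by omega]
  · rwa [show p.length - 3 - i + 1 = p.length - 1 - (i + 1) by omega]
  · rwa [show p.length - 3 - i + 2 = p.length - 1 - i by omega]

theorem blockedAt_reverse {C : Set U} {p : List U} {i : ℕ}
    (h : BlockedAt D C p.reverse i) : BlockedAt D C p (p.length - 3 - i) := by
  obtain ⟨w, hw, hi, hblk⟩ := h
  rw [List.length_reverse] at hi
  rw [List.getElem?_reverse (by omega)] at hw
  refine ⟨w, by rwa [show p.length - 3 - i + 1 = p.length - 1 - (i + 1) by omega], by omega, ?_⟩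
  rcases hblk with ⟨hcol, hdesc⟩ | ⟨hncol, hwC⟩
  · exact Or.inl ⟨colliderAt_reverse (by simpa using hi) hcol, hdesc⟩
  · refine Or.inr ⟨fun hcol => hncol ?_, hwC⟩
    have := colliderAt_reverse (p := p.reverse) (i := p.length - 3 - i) (by simp only [List.length_reverse]; omega)
      (by rwa [List.reverse_reverse])
    rwa [List.length_reverse, show p.length - 3 - (p.length - 3 - i) = i by omega] at this

theorem DSep.symm {A C B : Set U} (h : DSep D A C B) : DSep D B C A := by
  rintro p hp ⟨b, hb, hhead⟩ ⟨a, ha, hlast⟩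
  obtain ⟨i, hi⟩ := h p.reverse hp.reverse ⟨a, ha, by rwa [List.head?_reverse]⟩
    ⟨b, hb, by rwa [List.getLast?_reverse]⟩
  exact ⟨_, blockedAt_reverse hi⟩

/-- The first backward edge after `w → x` creates a collider that descends from `a`; as `C`
contains no descendant of `a`, that collider blocks the path. -/
theorem exists_blockedAt_of_adj {a b : U} {C : Set U} (hC : ∀ d, D.Reaches a d → d ∉ C)
    (hb : ¬ D.Reaches a b) :
    ∀ (l : List U) (w x : U), D.Adj w x → D.Reaches a x → (x :: l).IsChain D.UAdj →
      (x :: l).getLast? = some b → ∃ i, BlockedAt D C (w :: x :: l) i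
  | [], _, x, _, hx, _, hlast => absurd (by simpa using hlast) (fun h : x = b => hb (h ▸ hx))
  | y :: l, w, x, hwx, hx, hchain, hlast => by
    rw [List.isChain_cons_cons] at hchain
    rcases hchain.1 with hxy | hyx
    · obtain ⟨i, w', hw', hi, hblk⟩ := exists_blockedAt_of_adj hC hb l x y hxy (hx.tail hxy)
        hchain.2 (by simpa using hlast)
      refine ⟨i + 1, w', hw', by simpa using hi, ?_⟩
      simpa [ColliderAt] using hblk
    · exact ⟨0, x, rfl, by simp, Or.inl ⟨⟨w, x, y, rfl, rfl, rfl, hwx, hyx⟩,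
        fun d hd => hC d (hx.trans hd)⟩⟩

theorem DiGr.Acyclic.dSep_parents (hac : D.Acyclic) {a b : U} (hn : ¬ D.UAdj a b)
    (hr : ¬ D.Reaches a b) : DSep D {a} {v | D.Adj v a} {b} := by
  intro p hp hhead hlast
  simp only [Set.mem_singleton_iff, exists_eq_left] at hhead hlast
  obtain ⟨c, l, rfl⟩ : ∃ c l, p = a :: c :: l := by
    rcases p with _ | ⟨a', _ | ⟨c, l⟩⟩
    · simp at hhead
    · simp only [List.head?_cons, List.getLast?_singleton, Option.some.injEq] at hhead hlast
      exact absurd (hhead ▸ hlast ▸ .refl) hr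
    · exact ⟨c, l, by simpa using hhead⟩
  have hchain := List.isChain_cons_cons.mp hp.1
  rcases hchain.1 with hfwd | hbwd
  · exact exists_blockedAt_of_adj (fun d hd hda => hac.not_adj_of_reaches hd hda) hr l a c hfwd
      (.single hfwd) hchain.2 (by simpa using hlast)
  · obtain ⟨y, l', rfl⟩ : ∃ y l', l = y :: l' := by
      rcases l with _ | ⟨y, l'⟩
      · exact absurd ((by simpa using hlast : c = b) ▸ hchain.1) hn
      · exact ⟨y, l', rfl⟩
    refine ⟨0, c, rfl, by simp, Or.inr ⟨?_, hbwd⟩⟩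
    rintro ⟨_, _, _, ⟨⟩, ⟨⟩, -, hfwd, -⟩
    exact hac.not_adj_of_reaches (.single hfwd) hbwd

theorem DiGr.Acyclic.uAdj_of_forall_not_dSep (hac : D.Acyclic) {a b : U} (hab : a ≠ b)
    (h : ∀ C : Set U, C ⊆ Set.univ \ {a, b} → ¬ DSep D {a} C {b}) : D.UAdj a b := by
  by_contra hn
  by_cases hr : D.Reaches a b
  · have hn' : ¬ D.UAdj b a := fun h => hn h.symm
    have hr' : ¬ D.Reaches b a := fun hba => hab (hac.reaches_antisymm hr hba)
    exact h _ (Set.pair_comm a b ▸ hac.parents_subset_compl_pair hn')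
      (hac.dSep_parents hn' hr').symm
  · exact h _ (hac.parents_subset_compl_pair hn) (hac.dSep_parents hn hr)

theorem adj_and_adj_of_dSep_empty {x y z : U} (hxy : D.UAdj x y) (hyz : D.UAdj y z)
    (hnd : [x, y, z].Nodup) (h : DSep D {x} ∅ {z}) : D.Adj x y ∧ D.Adj z y := by
  have hpath : IsUPath D [x, y, z] := ⟨.cons_cons hxy (.cons_cons hyz (.singleton z)), hnd⟩
  obtain ⟨i, w, -, hi, hblk⟩ := h _ hpath ⟨x, rfl, rfl⟩ ⟨z, rfl, rfl⟩
  obtain rfl : i = 0 := by simp only [List.length_cons, List.length_nil] at hi; omega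
  rcases hblk with ⟨⟨_, _, _, ⟨⟩, ⟨⟩, ⟨⟩, hxy', hzy'⟩, -⟩ | ⟨-, ⟨⟩⟩
  exact ⟨hxy', hzy'⟩

/-- No DAG on four vertices `0,1,2,3` (standing for `1,2,3,4`) has a
d-separation relation in which 0–1, 1–2, 2–3 are dependent given everything,
while `I(0,∅,2)`, `I(0,{3},2)`, `I(1,∅,3)` and `I(1,{0},3)` hold. -/
theorem stmt7 :
    ¬ ∃ D' : DiGr (Fin 4), D'.Acyclic ∧
      (∀ C : Set (Fin 4), C ⊆ Set.univ \ {0, 1} → ¬ DSep D' {0} C {1}) ∧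
      (∀ C : Set (Fin 4), C ⊆ Set.univ \ {1, 2} → ¬ DSep D' {1} C {2}) ∧
      (∀ C : Set (Fin 4), C ⊆ Set.univ \ {2, 3} → ¬ DSep D' {2} C {3}) ∧
      DSep D' {0} ∅ {2} ∧ DSep D' {0} {3} {2} ∧
      DSep D' {1} ∅ {3} ∧ DSep D' {1} {0} {3} := by
  rintro ⟨D, hac, h01, h12, h23, h02, -, h13, -⟩
  have u01 := hac.uAdj_of_forall_not_dSep (by decide) h01
  have u12 := hac.uAdj_of_forall_not_dSep (by decide) h12
  have u23 := hac.uAdj_of_forall_not_dSep (by decide) h23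
  obtain ⟨-, a21⟩ := adj_and_adj_of_dSep_empty u01 u12 (by decide) h02
  obtain ⟨a12, -⟩ := adj_and_adj_of_dSep_empty u12 u23 (by decide) h13
  exact hac 1 ((Relation.TransGen.single a12).tail a21)
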